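/- Let 𝒩 be a connected plane Euclidean network. Then diam(𝒩_ℓ) equals the maximum of the following finite collection of values: (1) d(u,w) for all pairs of vertices u, w ∈ V(𝒩); (2) for every pair of distinct non-pendant edges uv and u'v', the value min{ (d(u,v)+d(v,v')+d(v',u')+d(u',u))/2 , (d(u,v)+d(v,u')+d(u',v')+d(v',u))/2 }; (3) for every pendant edge uv with u pendant and every non-pendant edge u'v', the value d(u,v) + (d(v,u')+d(u',v')+d(v',v))/2. -/

import Mathlib

/-!
A point of the locus lies on an edge, and a path between points of two edges leaves the first and
enters the second through endpoints: by planarity an edge is a neighbourhood, inside the locus, of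
each of its non-endpoints, and also of a pendant endpoint, so a connectedness argument on the
parameter interval forces the path through the remaining endpoints.

Upper bounds: the distance between two points is at most the length of any route through
endpoints, and averaging two complementary routes gives the half-cycle and pendant values; for two
pendant edges, the dead-end argument shows that the distance between the pendant vertices
dominates. Lower bounds: placing the two points so that all four routes through endpoints have
one of the two half-cycle lengths realises their minimum, and balancing a point on the far edge
in the same way realises the pendant value.
-/

open Set
open scoped ENNReal

noncomputable section

attribute [local instance] Classical.propDecidable

/-- Points of the Euclidean plane. -/
abbrev Pt : Type := EuclideanSpace ℝ (Fin 2)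

/-- Intrinsic (geodesic) distance inside a set `X ⊆ ℝ²`: the infimum of the lengths
(total variations) of continuous paths from `p` to `q` whose image lies in `X`. -/
def idist (X : Set Pt) (p q : Pt) : ℝ≥0∞ :=
  ⨅ (γ : ℝ → Pt) (_ : ContinuousOn γ (Set.Icc 0 1)) (_ : γ '' Set.Icc 0 1 ⊆ X)
    (_ : γ 0 = p) (_ : γ 1 = q), eVariationOn γ (Set.Icc 0 1)

/-- Eccentricity of a point within `X`. -/
def ecc (X : Set Pt) (p : Pt) : ℝ≥0∞ := ⨆ q ∈ X, idist X p q

/-- Intrinsic diameter of `X`. -/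
def idiam (X : Set Pt) : ℝ≥0∞ := ⨆ p ∈ X, ecc X p

/-- A plane Euclidean network: a finite set of vertices in the plane together with a
finite set of straight-line edges (recorded as ordered pairs of distinct vertices, each
edge recorded exactly once), such that two distinct edges meet only in common endpoints. -/
structure PlaneNetwork where
  V : Finset Pt
  Edg : Finset (Pt × Pt)
  ends_mem : ∀ e ∈ Edg, e.1 ∈ V ∧ e.2 ∈ V
  ends_ne : ∀ e ∈ Edg, e.1 ≠ e.2
  no_swap : ∀ e ∈ Edg, (e.2, e.1) ∉ Edg
  vertex_cover : ∀ v ∈ V, ∃ e ∈ Edg, v = e.1 ∨ v = e.2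
  plane : ∀ e ∈ Edg, ∀ f ∈ Edg, e ≠ f →
    segment ℝ e.1 e.2 ∩ segment ℝ f.1 f.2 ⊆ ({e.1, e.2} ∩ {f.1, f.2} : Set Pt)

namespace PlaneNetwork

/-- The locus of a network: the union of all its (closed) edges. -/
def locus (N : PlaneNetwork) : Set Pt := ⋃ e ∈ N.Edg, segment ℝ e.1 e.2

/-- A network is connected when its locus is path-connected. -/
def Connected (N : PlaneNetwork) : Prop := IsPathConnected N.locus

/-- `u` and `v` are joined by an edge of the network. -/
def IsEdge (N : PlaneNetwork) (u v : Pt) : Prop := (u, v) ∈ N.Edg ∨ (v, u) ∈ N.Edg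

/-- A vertex is pendant if it is an endpoint of exactly one edge. -/
def IsPendantVertex (N : PlaneNetwork) (v : Pt) : Prop :=
  v ∈ N.V ∧ (N.Edg.filter (fun e => e.1 = v ∨ e.2 = v)).card = 1

/-- The number of pendant vertices of a network. -/
def pendantCount (N : PlaneNetwork) : ℕ := (N.V.filter fun v => N.IsPendantVertex v).card

end PlaneNetwork

/-- The union of a set with all the segments in a list. -/
def insertSegs (X : Set Pt) (L : List (Pt × Pt)) : Set Pt :=
  X ∪ ⋃ s ∈ L, segment ℝ s.1 s.2

/-- The segments of the list are inserted iteratively: the endpoints of the first one lie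
on `X`, and the endpoints of each subsequent segment lie on the union of `X` with the
previously inserted segments. -/
def ValidSegs (X : Set Pt) : List (Pt × Pt) → Prop
  | [] => True
  | s :: rest => s.1 ∈ X ∧ s.2 ∈ X ∧ ValidSegs (X ∪ segment ℝ s.1 s.2) rest

/-- A shortcut set for `X`: a finite sequence of iteratively inserted segments whose
insertion strictly decreases the intrinsic diameter. -/
def IsShortcutSet (X : Set Pt) (L : List (Pt × Pt)) : Prop :=
  ValidSegs X L ∧ idiam (insertSegs X L) < idiam X

/-- `X` admits a shortcut set. -/
def HasShortcutSet (X : Set Pt) : Prop := ∃ L, IsShortcutSet X L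

/-- The shortcut number: the minimum size of a shortcut set. -/
def scn (X : Set Pt) : ℕ :=
  sInf {k | ∃ L : List (Pt × Pt), L.length = k ∧ IsShortcutSet X L}


open Filter Topology
open scoped NNReal

lemma ENNReal.le_add_div_two {d x y : ℝ≥0∞} (hx : d ≤ x) (hy : d ≤ y) : d ≤ (x + y) / 2 :=
  calc d = d / 2 + d / 2 := (ENNReal.add_halves d).symm
    _ ≤ x / 2 + y / 2 := by gcongr
    _ = (x + y) / 2 := ENNReal.add_div.symm

lemma ENNReal.exists_balanced_split {C D a : ℝ≥0∞} (hC : C ≠ ⊤) (hD : D ≠ ⊤) (ha : a ≠ ⊤)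
    (hCD : C ≤ D + a) (hDC : D ≤ C + a) :
    ∃ y y', y + y' = a ∧ C + y = (C + a + D) / 2 ∧ D + y' = (C + a + D) / 2 := by
  lift C to ℝ≥0 using hC
  lift D to ℝ≥0 using hD
  lift a to ℝ≥0 using ha
  norm_cast at hCD hDC
  have h₁ : C ≤ a + D := add_comm D a ▸ hCD
  have h₂ : D ≤ a + C := add_comm C a ▸ hDC
  refine ⟨((a + D - C) / 2 : ℝ≥0), ((a + C - D) / 2 : ℝ≥0), ?_, ?_, ?_⟩ <;> norm_cast <;>
    apply NNReal.eq <;> push_cast [NNReal.coe_sub h₁, NNReal.coe_sub h₂] <;> ring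

/- `x + x' = a` and `y + y' = a'` split two edges, and each of the four routes through their
endpoints has one of the two half-cycle lengths. -/
lemma ENNReal.exists_balanced_split₂ {A B C D a a' : ℝ≥0∞} (hA : A ≠ ⊤) (hB : B ≠ ⊤)
    (hC : C ≠ ⊤) (hD : D ≠ ⊤) (ha : a ≠ ⊤) (ha' : a' ≠ ⊤)
    (hAB : A ≤ B + a') (hBA : B ≤ A + a') (hCD : C ≤ D + a') (hDC : D ≤ C + a')
    (hAC : A ≤ C + a) (hCA : C ≤ A + a) (hBD : B ≤ D + a) (hDB : D ≤ B + a) :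
    ∃ x x' y y', x + x' = a ∧ y + y' = a' ∧
      x + A + y = (a + D + a' + A) / 2 ∧ x' + D + y' = (a + D + a' + A) / 2 ∧
      x + B + y' = (a + C + a' + B) / 2 ∧ x' + C + y = (a + C + a' + B) / 2 := by
  lift A to ℝ≥0 using hA
  lift B to ℝ≥0 using hB
  lift C to ℝ≥0 using hC
  lift D to ℝ≥0 using hD
  lift a to ℝ≥0 using ha
  lift a' to ℝ≥0 using ha'
  norm_cast at *
  have hx : A + B ≤ 2 * a + C + D := by rw [two_mul]; convert add_le_add hAC hBD using 1; ring
  have hx' : C + D ≤ 2 * a + A + B := by rw [two_mul]; convert add_le_add hCA hDB using 1; ring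
  have hy : A + C ≤ 2 * a' + B + D := by rw [two_mul]; convert add_le_add hAB hCD using 1; ring
  have hy' : B + D ≤ 2 * a' + A + C := by rw [two_mul]; convert add_le_add hBA hDC using 1; ring
  refine ⟨((2 * a + C + D - (A + B)) / 4 : ℝ≥0), ((2 * a + A + B - (C + D)) / 4 : ℝ≥0),
    ((2 * a' + B + D - (A + C)) / 4 : ℝ≥0), ((2 * a' + A + C - (B + D)) / 4 : ℝ≥0),
    ?_, ?_, ?_, ?_, ?_, ?_⟩ <;> norm_cast <;> apply NNReal.eq <;>
    push_cast [NNReal.coe_sub hx, NNReal.coe_sub hx', NNReal.coe_sub hy, NNReal.coe_sub hy'] <;>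
    ring

section Segment

variable {E : Type*} [NormedAddCommGroup E] [NormedSpace ℝ E]

lemma isClosed_segment (u v : E) : IsClosed (segment ℝ u v) := by
  rw [segment_eq_image_lineMap]
  exact (isCompact_Icc.image AffineMap.lineMap_continuous).isClosed

lemma mem_segment_of_mem_pair {u v w : E} (h : w ∈ ({u, v} : Set E)) : w ∈ segment ℝ u v := by
  rw [← convexHull_pair]
  exact subset_convexHull ℝ _ h

lemma segment_eq_segment_of_pair_eq {a b c d : E} (h : ({a, b} : Set E) = {c, d}) :
    segment ℝ a b = segment ℝ c d := by
  rw [← convexHull_pair, h, convexHull_pair]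

lemma edist_le_edist_of_mem_segment {u v p q : E} (hp : p ∈ segment ℝ u v)
    (hq : q ∈ segment ℝ u v) : edist p q ≤ edist u v :=
  calc edist p q ≤ Metric.ediam (segment ℝ u v) := Metric.edist_le_ediam_of_mem hp hq
    _ = edist u v := by rw [← convexHull_pair, convexHull_ediam, Metric.ediam_pair]

lemma exists_mem_segment_edist_eq {u v : E} {x x' : ℝ≥0∞} (h : x + x' = edist u v) :
    ∃ p ∈ segment ℝ u v, edist p u = x ∧ edist p v = x' := by
  have hx : x ≠ ⊤ := ne_top_of_le_ne_top (edist_ne_top u v) (h ▸ le_self_add)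
  have hx' : x' ≠ ⊤ := ne_top_of_le_ne_top (edist_ne_top u v) (h ▸ le_add_self)
  lift x to ℝ≥0 using hx
  lift x' to ℝ≥0 using hx'
  rw [edist_nndist] at h
  norm_cast at h
  rcases eq_or_ne u v with rfl | huv
  · obtain ⟨rfl, rfl⟩ := add_eq_zero.1 (h.trans (nndist_self u))
    exact ⟨u, left_mem_segment ℝ u u, by simp, by simp⟩
  have hreal : (x : ℝ) + x' = dist u v := by rw [← coe_nndist, ← h]; push_cast; ring
  have hd : 0 < dist u v := dist_pos.2 huv
  have ht : (x : ℝ) / dist u v ≤ 1 := (div_le_one hd).2 (by linarith [x'.2])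
  refine ⟨AffineMap.lineMap u v ((x : ℝ) / dist u v), ?_, ?_, ?_⟩
  · rw [segment_eq_image_lineMap]
    exact mem_image_of_mem _ ⟨by positivity, ht⟩
  · rw [edist_dist, dist_lineMap_left, Real.norm_of_nonneg (by positivity),
      div_mul_cancel₀ _ hd.ne']
    simp
  · rw [edist_dist, dist_lineMap_right, Real.norm_of_nonneg (sub_nonneg.2 ht), sub_mul,
      div_mul_cancel₀ _ hd.ne', one_mul, ← hreal, add_sub_cancel_left]
    simp

lemma edist_add_edist_of_mem_segment {x y z : E} (h : y ∈ segment ℝ x z) :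
    edist x y + edist y z = edist x z := by
  rw [edist_dist, edist_dist, edist_dist, ← ENNReal.ofReal_add dist_nonneg dist_nonneg,
    dist_add_dist_of_mem_segment h]

end Segment

lemma ContinuousOn.exists_mem_of_isClosed_of_mem_nhdsWithin {α : Type*} [TopologicalSpace α]
    {X S G : Set α} (hS : IsClosed S) (hSX : ∀ w ∈ S \ G, S ∈ 𝓝[X] w) {γ : ℝ → α}
    (hc : ContinuousOn γ (Icc 0 1)) (himg : MapsTo γ (Icc 0 1) X) (h0 : γ 0 ∉ S \ G)
    (h1 : γ 1 ∈ S) : ∃ t ∈ Icc (0 : ℝ) 1, γ t ∈ G := by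
  by_contra! hG
  have : PreconnectedSpace (Icc (0 : ℝ) 1) :=
    isPreconnected_iff_preconnectedSpace.1 isPreconnected_Icc
  set f : Icc (0 : ℝ) 1 → α := (Icc (0 : ℝ) 1).domRestrict γ
  have hf : Continuous f := hc.domRestrict
  have hopen : IsOpen (f ⁻¹' S) := isOpen_iff_mem_nhds.2 fun t ht =>
    (tendsto_nhdsWithin_iff.2 ⟨hf.continuousAt, .of_forall fun s => himg s.2⟩ :
      Tendsto f (𝓝 t) (𝓝[X] (f t))) (hSX _ ⟨ht, hG t t.2⟩)
  rcases isClopen_iff.1 ⟨hS.preimage hf, hopen⟩ with h | h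
  · exact (h ▸ h1 : (⟨1, right_mem_Icc.2 zero_le_one⟩ : Icc (0 : ℝ) 1) ∈ (∅ : Set _))
  · exact h0 ⟨(h ▸ mem_univ _ : (⟨0, left_mem_Icc.2 zero_le_one⟩ : Icc (0 : ℝ) 1) ∈ f ⁻¹' S),
      hG 0 (left_mem_Icc.2 zero_le_one)⟩

section IntrinsicDistance

variable {X : Set Pt} {p q r : Pt}

lemma idist_le_eVariationOn {γ : ℝ → Pt} (hc : ContinuousOn γ (Icc 0 1))
    (himg : γ '' Icc 0 1 ⊆ X) (h0 : γ 0 = p) (h1 : γ 1 = q) :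
    idist X p q ≤ eVariationOn γ (Icc 0 1) :=
  iInf₂_le_of_le γ hc <| iInf₂_le_of_le himg h0 <| iInf_le _ h1

lemma edist_le_idist : edist p q ≤ idist X p q :=
  le_iInf₂ fun γ _ => le_iInf₂ fun _ h0 => le_iInf fun h1 => h0 ▸ h1 ▸
    eVariationOn.edist_le γ (left_mem_Icc.2 zero_le_one) (right_mem_Icc.2 zero_le_one)

lemma idist_le_eVariationOn_Icc {γ : ℝ → Pt} {a b : ℝ} (hab : a ≤ b)
    (hc : ContinuousOn γ (Icc a b)) (himg : γ '' Icc a b ⊆ X) :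
    idist X (γ a) (γ b) ≤ eVariationOn γ (Icc a b) := by
  set φ : ℝ → ℝ := fun t => a + t • (b - a)
  have hφ : φ '' Icc 0 1 = Icc a b := by rw [← segment_eq_image', segment_eq_Icc hab]
  have hmono : MonotoneOn φ (Icc 0 1) := fun s _ t _ hst => by
    simp only [φ, smul_eq_mul]; nlinarith
  calc idist X (γ a) (γ b) = idist X ((γ ∘ φ) 0) ((γ ∘ φ) 1) := by simp [φ]
    _ ≤ eVariationOn (γ ∘ φ) (Icc 0 1) :=
        idist_le_eVariationOn (hc.comp (by fun_prop) (hφ ▸ mapsTo_image φ _))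
          (by rw [image_comp, hφ]; exact himg) rfl rfl
    _ = eVariationOn γ (Icc a b) := by rw [eVariationOn.comp_eq_of_monotoneOn _ _ hmono, hφ]

lemma idist_comm_le : idist X q p ≤ idist X p q :=
  le_iInf₂ fun γ hc => le_iInf₂ fun himg h0 => le_iInf fun h1 => by
    have hψ : (fun t : ℝ => 1 - t) '' Icc 0 1 = Icc 0 1 := by simp [image_const_sub_Icc]
    calc idist X q p ≤ eVariationOn (γ ∘ fun t => 1 - t) (Icc 0 1) :=
          idist_le_eVariationOn (hc.comp (by fun_prop) ((mapsTo_image _ _).mono_right hψ.subset))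
            (by rw [image_comp, hψ]; exact himg) (by simp [h1]) (by simp [h0])
      _ = eVariationOn γ (Icc 0 1) := by
          rw [eVariationOn.comp_eq_of_antitoneOn _ _ fun s _ t _ h => by linarith, hψ]

lemma idist_comm : idist X p q = idist X q p := le_antisymm idist_comm_le idist_comm_le

lemma idist_le_eVariationOn_add_eVariationOn {γ₁ γ₂ : ℝ → Pt}
    (hc₁ : ContinuousOn γ₁ (Icc 0 1)) (himg₁ : γ₁ '' Icc 0 1 ⊆ X) (h₁0 : γ₁ 0 = p)
    (h₁1 : γ₁ 1 = q) (hc₂ : ContinuousOn γ₂ (Icc 0 1)) (himg₂ : γ₂ '' Icc 0 1 ⊆ X)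
    (h₂0 : γ₂ 0 = q) (h₂1 : γ₂ 1 = r) :
    idist X p r ≤ eVariationOn γ₁ (Icc 0 1) + eVariationOn γ₂ (Icc 0 1) := by
  set γ : ℝ → Pt := fun t => if t ≤ 1 then γ₁ t else γ₂ (t - 1)
  have hshift : (fun t : ℝ => t - 1) '' Icc 1 2 = Icc 0 1 := by norm_num [image_sub_const_Icc]
  have heq₁ : EqOn γ γ₁ (Icc 0 1) := fun t ht => if_pos ht.2
  have heq₂ : EqOn γ (γ₂ ∘ fun t => t - 1) (Icc 1 2) := fun t ht => by
    rcases ht.1.eq_or_lt with rfl | h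
    · simp [γ, h₁1, h₂0]
    · simp [γ, not_le.2 h]
  have hc₂' : ContinuousOn (γ₂ ∘ fun t => t - 1) (Icc 1 2) :=
    hc₂.comp (by fun_prop) (hshift ▸ mapsTo_image _ _)
  have hc : ContinuousOn γ (Icc 0 2) := by
    rw [← Icc_union_Icc_eq_Icc zero_le_one one_le_two]
    exact (hc₁.congr heq₁).union_of_isClosed (hc₂'.congr heq₂) isClosed_Icc isClosed_Icc
  have himg : γ '' Icc 0 2 ⊆ X := by
    rw [← Icc_union_Icc_eq_Icc zero_le_one one_le_two, image_union, heq₁.image_eq,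
      heq₂.image_eq, image_comp, hshift]
    exact union_subset himg₁ himg₂
  calc idist X p r = idist X (γ 0) (γ 2) := by norm_num [γ, h₁0, h₂1]
    _ ≤ eVariationOn γ (Icc 0 2) := idist_le_eVariationOn_Icc zero_le_two hc himg
    _ = eVariationOn γ (Icc 0 1) + eVariationOn γ (Icc 1 2) := by
        simpa using (eVariationOn.Icc_add_Icc γ zero_le_one one_le_two (mem_univ 1)).symm
    _ = eVariationOn γ₁ (Icc 0 1) + eVariationOn γ₂ (Icc 0 1) := by
        rw [eVariationOn.eq_of_eqOn heq₁, eVariationOn.eq_of_eqOn heq₂,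
          eVariationOn.comp_eq_of_monotoneOn _ _ fun s _ t _ h => by linarith, hshift]

lemma idist_triangle (p q r : Pt) : idist X p r ≤ idist X p q + idist X q r := by
  conv_rhs => simp only [idist, ENNReal.iInf_add, ENNReal.add_iInf]
  exact le_iInf₂ fun γ₂ hc₂ => le_iInf₂ fun himg₂ h₂0 => le_iInf fun h₂1 =>
    le_iInf₂ fun γ₁ hc₁ => le_iInf₂ fun himg₁ h₁0 => le_iInf fun h₁1 =>
      idist_le_eVariationOn_add_eVariationOn hc₁ himg₁ h₁0 h₁1 hc₂ himg₂ h₂0 h₂1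

lemma idist_le_edist_of_segment_subset (h : segment ℝ p q ⊆ X) : idist X p q ≤ edist p q := by
  have hlip := lipschitzWith_lineMap (𝕜 := ℝ) p q
  have hid : eVariationOn (id : ℝ → ℝ) (Icc 0 1) = 1 := by simp
  calc idist X p q ≤ eVariationOn (AffineMap.lineMap p q ∘ id) (Icc 0 1) :=
        idist_le_eVariationOn hlip.continuous.continuousOn
          (by rwa [Function.comp_id, ← segment_eq_image_lineMap]) (by simp) (by simp)
    _ ≤ nndist p q * eVariationOn (id : ℝ → ℝ) (Icc 0 1) :=
        hlip.lipschitzOnWith.comp_eVariationOn_le (mapsTo_univ _ _)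
    _ = edist p q := by rw [hid, mul_one, edist_nndist]

lemma idist_le_edist_add_idist_add_edist {w w' : Pt} (hpw : segment ℝ p w ⊆ X)
    (hw'q : segment ℝ w' q ⊆ X) :
    idist X p q ≤ edist p w + idist X w w' + edist w' q :=
  calc idist X p q ≤ idist X p w + idist X w w' + idist X w' q := by
        grw [idist_triangle p w' q, idist_triangle p w w']
    _ ≤ edist p w + idist X w w' + edist w' q := by
        gcongr
        exacts [idist_le_edist_of_segment_subset hpw, idist_le_edist_of_segment_subset hw'q]

lemma idist_le_idiam (hp : p ∈ X) (hq : q ∈ X) : idist X p q ≤ idiam X :=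
  le_iSup₂_of_le p hp <| le_iSup₂_of_le (f := fun q _ => idist X p q) q hq le_rfl

lemma idist_ne_top (h : idiam X ≠ ⊤) (hp : p ∈ X) (hq : q ∈ X) : idist X p q ≠ ⊤ :=
  ne_top_of_le_ne_top h (idist_le_idiam hp hq)

lemma iInf_idist_add_edist_le_idist {S G : Set Pt} (hS : IsClosed S)
    (hSX : ∀ w ∈ S \ G, S ∈ 𝓝[X] w) {z : Pt} (hz : z ∉ S \ G) (hp : p ∈ S) :
    ⨅ g ∈ G, idist X z g + edist g p ≤ idist X z p :=
  le_iInf₂ fun γ hc => le_iInf₂ fun himg h0 => le_iInf fun h1 => by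
    subst h0 h1
    obtain ⟨t, ht, hγt⟩ :=
      hc.exists_mem_of_isClosed_of_mem_nhdsWithin hS hSX (mapsTo_iff_image_subset.2 himg) hz hp
    calc ⨅ g ∈ G, idist X (γ 0) g + edist g (γ 1)
        ≤ idist X (γ 0) (γ t) + edist (γ t) (γ 1) := iInf₂_le _ hγt
      _ ≤ eVariationOn γ (Icc 0 t) + eVariationOn γ (Icc t 1) :=
          add_le_add (idist_le_eVariationOn_Icc ht.1 (hc.mono (Icc_subset_Icc_right ht.2))
            ((image_mono (Icc_subset_Icc_right ht.2)).trans himg))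
            (eVariationOn.edist_le γ (left_mem_Icc.2 ht.2) (right_mem_Icc.2 ht.2))
      _ = eVariationOn γ (Icc 0 1) := by
          simpa using eVariationOn.Icc_add_Icc γ ht.1 ht.2 (mem_univ t)

end IntrinsicDistance

namespace PlaneNetwork

variable {N : PlaneNetwork} {u v u' v' w p q z : Pt}

lemma IsEdge.symm (h : N.IsEdge u v) : N.IsEdge v u := Or.symm h

lemma IsEdge.exists_mem_edg (h : N.IsEdge u v) :
    ∃ e ∈ N.Edg, ({e.1, e.2} : Set Pt) = {u, v} :=
  h.elim (fun h => ⟨_, h, rfl⟩) fun h => ⟨_, h, pair_comm v u⟩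

lemma IsEdge.left_mem_V (h : N.IsEdge u v) : u ∈ N.V :=
  h.elim (fun h => (N.ends_mem _ h).1) fun h => (N.ends_mem _ h).2

lemma IsEdge.segment_subset_locus (h : N.IsEdge u v) : segment ℝ u v ⊆ N.locus := by
  obtain ⟨e, he, hpair⟩ := h.exists_mem_edg
  rw [← segment_eq_segment_of_pair_eq hpair]
  exact subset_biUnion_of_mem (u := fun e : Pt × Pt => segment ℝ e.1 e.2) he

lemma IsEdge.left_mem_locus (h : N.IsEdge u v) : u ∈ N.locus :=
  h.segment_subset_locus (left_mem_segment ℝ u v)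

lemma IsEdge.idist_eq (h : N.IsEdge u v) : idist N.locus u v = edist u v :=
  le_antisymm (idist_le_edist_of_segment_subset h.segment_subset_locus) edist_le_idist

lemma mem_locus_of_mem_V (hv : v ∈ N.V) : v ∈ N.locus := by
  obtain ⟨e, he, rfl | rfl⟩ := N.vertex_cover v hv
  exacts [IsEdge.left_mem_locus (Or.inl he), IsEdge.left_mem_locus (Or.inr he)]

lemma IsEdge.segment_inter_subset (h : N.IsEdge u v) (h' : N.IsEdge u' v')
    (hne : ({u, v} : Set Pt) ≠ {u', v'}) :
    segment ℝ u v ∩ segment ℝ u' v' ⊆ ({u, v} ∩ {u', v'} : Set Pt) := by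
  obtain ⟨e, he, hpair⟩ := h.exists_mem_edg
  obtain ⟨f, hf, hpair'⟩ := h'.exists_mem_edg
  have hef : e ≠ f := by rintro rfl; exact hne (hpair.symm.trans hpair')
  have := N.plane e he f hf hef
  rwa [segment_eq_segment_of_pair_eq hpair, segment_eq_segment_of_pair_eq hpair', hpair,
    hpair'] at this

lemma IsEdge.notMem_segment_diff (h : N.IsEdge u v) (h' : N.IsEdge u' v')
    (hne : ({u, v} : Set Pt) ≠ {u', v'}) : u ∉ segment ℝ u' v' \ {u', v'} := fun hu =>
  hu.2 (h'.segment_inter_subset h hne.symm ⟨hu.1, left_mem_segment ℝ u v⟩).1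

lemma IsPendantVertex.eq_of_isEdge (hu : N.IsPendantVertex u) (h : N.IsEdge u v)
    (h' : N.IsEdge u w) : v = w := by
  obtain ⟨e, he, hpair⟩ := h.exists_mem_edg
  obtain ⟨f, hf, hpair'⟩ := h'.exists_mem_edg
  have hmem : ∀ {g : Pt × Pt} {x : Pt}, g ∈ N.Edg → ({g.1, g.2} : Set Pt) = {u, x} →
      g ∈ N.Edg.filter fun e => e.1 = u ∨ e.2 = u := fun hg hgpair =>
    Finset.mem_filter.2 ⟨hg, by
      have : u ∈ ({_, _} : Set Pt) := hgpair ▸ mem_insert u {_}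
      exact this.imp Eq.symm Eq.symm⟩
  have hef : e = f := Finset.card_le_one.1 hu.2.le _ (hmem he hpair) _ (hmem hf hpair')
  subst hef
  rcases pair_eq_pair_iff.1 (hpair.symm.trans hpair') with ⟨-, h⟩ | ⟨h₁, h₂⟩
  exacts [h, h₂.trans h₁]

lemma IsPendantVertex.notMem_of_isEdge (hu : N.IsPendantVertex u) (h : N.IsEdge u v)
    (h' : N.IsEdge u' v') (hne : ({u, v} : Set Pt) ≠ {u', v'}) : u ∉ ({u', v'} : Set Pt) := by
  rintro (rfl | rfl)
  · exact hne (by rw [hu.eq_of_isEdge h h'])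
  · exact hne (by rw [hu.eq_of_isEdge h h'.symm, pair_comm])

lemma exists_isEdge_of_mem_locus (hp : p ∈ N.locus) :
    ∃ u v, N.IsEdge u v ∧ p ∈ segment ℝ u v ∧ (N.IsPendantVertex v → N.IsPendantVertex u) := by
  obtain ⟨e, he, hp⟩ := mem_iUnion₂.1 hp
  by_cases hv : N.IsPendantVertex e.2
  · exact ⟨e.2, e.1, Or.inr he, segment_symm ℝ e.1 e.2 ▸ hp, fun _ => hv⟩
  · exact ⟨e.1, e.2, Or.inl he, hp, fun h => absurd h hv⟩

lemma segment_mem_nhdsWithin_locus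
    (hother : ∀ a b, N.IsEdge a b → ({a, b} : Set Pt) ≠ {u, v} → w ∉ segment ℝ a b) :
    segment ℝ u v ∈ 𝓝[N.locus] w := by
  set K := ⋃ e ∈ N.Edg.filter (fun e => ({e.1, e.2} : Set Pt) ≠ {u, v}), segment ℝ e.1 e.2
  have hK : IsClosed K := (Finset.finite_toSet _).isClosed_biUnion fun _ _ => isClosed_segment _ _
  have hwK : w ∉ K := by
    simp only [K, mem_iUnion₂, Finset.mem_filter]
    rintro ⟨e, ⟨he, hne⟩, hwe⟩
    exact hother e.1 e.2 (Or.inl he) hne hwe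
  refine mem_nhdsWithin_iff_exists_mem_nhds_inter.2 ⟨Kᶜ, hK.isOpen_compl.mem_nhds hwK, ?_⟩
  rintro z ⟨hzK, hz⟩
  obtain ⟨e, he, hze⟩ := mem_iUnion₂.1 hz
  by_cases hpair : ({e.1, e.2} : Set Pt) = {u, v}
  · exact segment_eq_segment_of_pair_eq hpair ▸ hze
  · exact absurd (mem_iUnion₂.2 ⟨e, Finset.mem_filter.2 ⟨he, hpair⟩, hze⟩) hzK

lemma IsEdge.segment_mem_nhdsWithin_of_notMem (h : N.IsEdge u v) (hw : w ∈ segment ℝ u v)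
    (hw' : w ∉ ({u, v} : Set Pt)) : segment ℝ u v ∈ 𝓝[N.locus] w :=
  segment_mem_nhdsWithin_locus fun _ _ hab hne hwab =>
    hw' (h.segment_inter_subset hab hne.symm ⟨hw, hwab⟩).1

lemma IsPendantVertex.segment_mem_nhdsWithin (hu : N.IsPendantVertex u) (h : N.IsEdge u v) :
    segment ℝ u v ∈ 𝓝[N.locus] u :=
  segment_mem_nhdsWithin_locus fun _ _ hab hne hu' =>
    hu.notMem_of_isEdge h hab hne.symm
      (hab.segment_inter_subset h hne ⟨hu', left_mem_segment ℝ u v⟩).1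

lemma IsEdge.exists_idist_add_edist_le (h : N.IsEdge u v) (hp : p ∈ segment ℝ u v)
    (hz : z ∉ segment ℝ u v \ {u, v}) :
    ∃ w ∈ ({u, v} : Set Pt), idist N.locus z w + edist w p ≤ idist N.locus z p := by
  have := iInf_idist_add_edist_le_idist (isClosed_segment u v)
    (fun w hw => h.segment_mem_nhdsWithin_of_notMem hw.1 hw.2) hz hp
  rw [iInf_pair] at this
  rcases inf_le_iff.1 this with hu | hv
  exacts [⟨u, .inl rfl, hu⟩, ⟨v, .inr rfl, hv⟩]

lemma IsPendantVertex.idist_add_edist_le (hu : N.IsPendantVertex u) (h : N.IsEdge u v)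
    (hz : z ∉ segment ℝ u v \ {v}) :
    idist N.locus z v + edist v u ≤ idist N.locus z u := by
  have hnhds : ∀ w ∈ segment ℝ u v \ {v}, segment ℝ u v ∈ 𝓝[N.locus] w := by
    rintro w ⟨hw, hwv⟩
    by_cases hwu : w = u
    · exact hwu ▸ hu.segment_mem_nhdsWithin h
    · exact h.segment_mem_nhdsWithin_of_notMem hw (by rintro (h | h) <;> contradiction)
  simpa using iInf_idist_add_edist_le_idist (isClosed_segment u v) hnhds hz
    (left_mem_segment ℝ u v)

lemma IsEdge.exists_edist_add_idist_add_edist_le (h : N.IsEdge u v) (h' : N.IsEdge u' v')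
    (hne : ({u, v} : Set Pt) ≠ {u', v'}) (hp : p ∈ segment ℝ u v) (hq : q ∈ segment ℝ u' v') :
    ∃ w ∈ ({u, v} : Set Pt), ∃ w' ∈ ({u', v'} : Set Pt),
      edist p w + idist N.locus w w' + edist w' q ≤ idist N.locus p q := by
  have hq' : q ∉ segment ℝ u v \ {u, v} := fun hq' =>
    hq'.2 (h.segment_inter_subset h' hne ⟨hq'.1, hq⟩).1
  obtain ⟨w, hw, hqw⟩ := h.exists_idist_add_edist_le hp hq'
  have hw' : w ∉ segment ℝ u' v' \ {u', v'} := by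
    rcases hw with rfl | rfl
    exacts [h.notMem_segment_diff h' hne,
      h.symm.notMem_segment_diff h' (by rwa [pair_comm])]
  obtain ⟨w', hw'', hww'⟩ := h'.exists_idist_add_edist_le hq hw'
  refine ⟨w, hw, w', hw'', ?_⟩
  calc edist p w + idist N.locus w w' + edist w' q
      = idist N.locus w w' + edist w' q + edist w p := by rw [edist_comm p w]; ring
    _ ≤ idist N.locus q w + edist w p := by rw [idist_comm (p := q)]; gcongr
    _ ≤ idist N.locus p q := by rw [idist_comm (p := p)]; exact hqw

def cycleValue (N : PlaneNetwork) (u v u' v' : Pt) : ℝ≥0∞ :=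
  min ((idist N.locus u v + idist N.locus v v' + idist N.locus v' u' + idist N.locus u' u) / 2)
    ((idist N.locus u v + idist N.locus v u' + idist N.locus u' v' + idist N.locus v' u) / 2)

def pendantValue (N : PlaneNetwork) (u v u' v' : Pt) : ℝ≥0∞ :=
  idist N.locus u v + (idist N.locus v u' + idist N.locus u' v' + idist N.locus v' v) / 2

lemma IsEdge.segment_subset_locus_of_mem (h : N.IsEdge u v) (hp : p ∈ segment ℝ u v)
    (hq : q ∈ segment ℝ u v) : segment ℝ p q ⊆ N.locus :=
  ((convex_segment u v).segment_subset hp hq).trans h.segment_subset_locus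

lemma IsEdge.idist_le_of_mem_segment (h : N.IsEdge u v) (hp : p ∈ segment ℝ u v)
    (hq : q ∈ segment ℝ u v) : idist N.locus p q ≤ idist N.locus u v :=
  calc idist N.locus p q ≤ edist p q :=
        idist_le_edist_of_segment_subset (h.segment_subset_locus_of_mem hp hq)
    _ ≤ edist u v := edist_le_edist_of_mem_segment hp hq
    _ = idist N.locus u v := h.idist_eq.symm

lemma IsEdge.idist_le_route (h : N.IsEdge u v) (h' : N.IsEdge u' v') (hp : p ∈ segment ℝ u v)
    (hq : q ∈ segment ℝ u' v') {w w' : Pt} (hw : w ∈ ({u, v} : Set Pt))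
    (hw' : w' ∈ ({u', v'} : Set Pt)) :
    idist N.locus p q ≤ edist p w + idist N.locus w w' + edist w' q :=
  idist_le_edist_add_idist_add_edist (h.segment_subset_locus_of_mem hp (mem_segment_of_mem_pair hw))
    (h'.segment_subset_locus_of_mem (mem_segment_of_mem_pair hw') hq)

lemma IsEdge.idist_le_cycleValue (h : N.IsEdge u v) (h' : N.IsEdge u' v')
    (hp : p ∈ segment ℝ u v) (hq : q ∈ segment ℝ u' v') :
    idist N.locus p q ≤ N.cycleValue u v u' v' := by
  have hp' := edist_add_edist_of_mem_segment hp
  have hq' := edist_add_edist_of_mem_segment hq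
  have e₁ : (edist p u + idist N.locus u u' + edist u' q) + (edist p v + idist N.locus v v' +
      edist v' q) = idist N.locus u v + idist N.locus v v' + idist N.locus v' u' +
      idist N.locus u' u := by
    rw [h.idist_eq, h'.symm.idist_eq, edist_comm v' u', ← hp', ← hq', idist_comm (p := u'),
      edist_comm u p, edist_comm q v']
    ring
  have e₂ : (edist p u + idist N.locus u v' + edist v' q) + (edist p v + idist N.locus v u' +
      edist u' q) = idist N.locus u v + idist N.locus v u' + idist N.locus u' v' +
      idist N.locus v' u := by
    rw [h.idist_eq, h'.idist_eq, ← hp', ← hq', idist_comm (p := v'), edist_comm u p,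
      edist_comm q v']
    ring
  rw [cycleValue, ← e₁, ← e₂]
  exact le_min
    (ENNReal.le_add_div_two (h.idist_le_route h' hp hq (.inl rfl) (.inl rfl))
      (h.idist_le_route h' hp hq (.inr rfl) (.inr rfl)))
    (ENNReal.le_add_div_two (h.idist_le_route h' hp hq (.inl rfl) (.inr rfl))
      (h.idist_le_route h' hp hq (.inr rfl) (.inl rfl)))

lemma IsEdge.idist_le_half_cycle (h : N.IsEdge u v) (hq : q ∈ segment ℝ u v) (z : Pt) :
    idist N.locus z q ≤ (idist N.locus z u + idist N.locus u v + idist N.locus v z) / 2 := by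
  have hroute : ∀ w ∈ ({u, v} : Set Pt), idist N.locus z q ≤ idist N.locus z w + edist w q :=
    fun w hw => (idist_triangle z w q).trans
      (add_le_add_right (idist_le_edist_of_segment_subset <|
        h.segment_subset_locus_of_mem (mem_segment_of_mem_pair hw) hq) _)
  convert ENNReal.le_add_div_two (hroute u (.inl rfl)) (hroute v (.inr rfl)) using 2
  rw [h.idist_eq, ← edist_add_edist_of_mem_segment hq, idist_comm (p := v), edist_comm q v]
  ring

lemma IsEdge.idist_le_pendantValue (h : N.IsEdge u v) (h' : N.IsEdge u' v')
    (hp : p ∈ segment ℝ u v) (hq : q ∈ segment ℝ u' v') :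
    idist N.locus p q ≤ N.pendantValue u v u' v' :=
  (idist_triangle p v q).trans <| add_le_add
    (h.idist_le_of_mem_segment hp (right_mem_segment ℝ u v)) (h'.idist_le_half_cycle hq v)

lemma IsPendantVertex.notMem_segment_diff (hu : N.IsPendantVertex u) (h : N.IsEdge u v)
    (h' : N.IsEdge u' v') (hne : ({u, v} : Set Pt) ≠ {u', v'}) (hq : q ∈ segment ℝ u' v') :
    q ∉ segment ℝ u v \ {v} := by
  rintro ⟨hq', hqv⟩
  obtain ⟨rfl | rfl, hq''⟩ := h.segment_inter_subset h' hne ⟨hq', hq⟩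
  exacts [hu.notMem_of_isEdge h h' hne hq'', hqv rfl]

lemma IsPendantVertex.idist_le_idist_of_isPendantVertex (hu : N.IsPendantVertex u)
    (h : N.IsEdge u v) (hu' : N.IsPendantVertex u') (h' : N.IsEdge u' v')
    (hne : ({u, v} : Set Pt) ≠ {u', v'}) (hp : p ∈ segment ℝ u v) (hq : q ∈ segment ℝ u' v') :
    idist N.locus p q ≤ idist N.locus u u' := by
  have hne' : ({u', v'} : Set Pt) ≠ {u, v} := Ne.symm hne
  have hvu' : idist N.locus v v' + edist v' u' ≤ idist N.locus v u' :=
    hu'.idist_add_edist_le h' (hu'.notMem_segment_diff h' h hne' (right_mem_segment ℝ u v))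
  have hu'u : idist N.locus u' v + edist v u ≤ idist N.locus u' u :=
    hu.idist_add_edist_le h (hu.notMem_segment_diff h h' hne (left_mem_segment ℝ u' v'))
  calc idist N.locus p q ≤ edist p v + idist N.locus v v' + edist v' q :=
        h.idist_le_route h' hp hq (.inr rfl) (.inr rfl)
    _ ≤ edist u v + idist N.locus v v' + edist v' u' := by
        rw [edist_comm v' q, edist_comm v' u']
        gcongr
        exacts [edist_le_edist_of_mem_segment hp (right_mem_segment ℝ u v),
          edist_le_edist_of_mem_segment hq (right_mem_segment ℝ u' v')]
    _ ≤ idist N.locus u' v + edist v u := by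
        rw [add_assoc, add_comm, edist_comm u v, idist_comm (p := u')]; gcongr
    _ ≤ idist N.locus u u' := by rw [idist_comm (p := u)]; exact hu'u

lemma IsEdge.cycleValue_le_idiam (h : N.IsEdge u v) (h' : N.IsEdge u' v')
    (hne : ({u, v} : Set Pt) ≠ {u', v'}) : N.cycleValue u v u' v' ≤ idiam N.locus := by
  rcases eq_or_ne (idiam N.locus) ⊤ with htop | htop
  · exact htop ▸ le_top
  have hu := h.left_mem_locus
  have hv := h.symm.left_mem_locus
  have hu' := h'.left_mem_locus
  have hv' := h'.symm.left_mem_locus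
  have tri : ∀ a b c, idist N.locus a c ≤ idist N.locus a b + idist N.locus b c := idist_triangle
  obtain ⟨x, x', y, y', hx, hy, e₁, e₂, e₃, e₄⟩ := ENNReal.exists_balanced_split₂
    (idist_ne_top htop hu hu') (idist_ne_top htop hu hv') (idist_ne_top htop hv hu')
    (idist_ne_top htop hv hv') (idist_ne_top htop hu hv) (idist_ne_top htop hu' hv')
    ((tri u v' u').trans_eq (by rw [idist_comm (p := v')])) (tri u u' v')
    ((tri v v' u').trans_eq (by rw [idist_comm (p := v')])) (tri v u' v')
    ((tri u v u').trans_eq (add_comm _ _))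
    ((tri v u u').trans_eq (by rw [idist_comm (p := v), add_comm]))
    ((tri u v v').trans_eq (add_comm _ _))
    ((tri v u v').trans_eq (by rw [idist_comm (p := v), add_comm]))
  rw [h.idist_eq] at hx
  rw [h'.idist_eq] at hy
  obtain ⟨p, hp, hpu, hpv⟩ := exists_mem_segment_edist_eq hx
  obtain ⟨q, hq, hqu', hqv'⟩ := exists_mem_segment_edist_eq hy
  obtain ⟨w, hw, w', hw', hroute⟩ := h.exists_edist_add_idist_add_edist_le h' hne hp hq
  refine le_trans ?_ (hroute.trans
    (idist_le_idiam (h.segment_subset_locus hp) (h'.segment_subset_locus hq)))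
  rw [cycleValue, idist_comm (p := v') (q := u'), idist_comm (p := u') (q := u),
    idist_comm (p := v') (q := u)]
  rcases hw with rfl | rfl <;> rcases hw' with rfl | rfl
  · rw [hpu, edist_comm, hqu', e₁]; exact min_le_left _ _
  · rw [hpu, edist_comm, hqv', e₃]; exact min_le_right _ _
  · rw [hpv, edist_comm, hqu', e₄]; exact min_le_right _ _
  · rw [hpv, edist_comm, hqv', e₂]; exact min_le_left _ _

lemma IsPendantVertex.pendantValue_le_idiam (hu : N.IsPendantVertex u) (h : N.IsEdge u v)
    (h' : N.IsEdge u' v') (hu' : u ∉ ({u', v'} : Set Pt)) :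
    N.pendantValue u v u' v' ≤ idiam N.locus := by
  have hne : ({u, v} : Set Pt) ≠ {u', v'} := fun he => hu' (he ▸ mem_insert u {v})
  rcases eq_or_ne (idiam N.locus) ⊤ with htop | htop
  · exact htop ▸ le_top
  have hv := h.symm.left_mem_locus
  have hu'X := h'.left_mem_locus
  have hv'X := h'.symm.left_mem_locus
  obtain ⟨y, y', hy, e₁, e₂⟩ := ENNReal.exists_balanced_split (idist_ne_top htop hv hu'X)
    (idist_ne_top htop hv hv'X) (idist_ne_top htop hu'X hv'X)
    ((idist_triangle v v' u').trans_eq (by rw [idist_comm (p := v')]))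
    (idist_triangle v u' v')
  rw [h'.idist_eq] at hy
  obtain ⟨q, hq, hqu', hqv'⟩ := exists_mem_segment_edist_eq hy
  obtain ⟨w', hw', hvq⟩ := h'.exists_idist_add_edist_le hq
    (h.symm.notMem_segment_diff h' (by rwa [pair_comm]))
  calc N.pendantValue u v u' v'
      = edist v u + (idist N.locus v u' + idist N.locus u' v' + idist N.locus v v') / 2 := by
        rw [pendantValue, idist_comm (p := v'), h.idist_eq, edist_comm]
    _ ≤ edist v u + (idist N.locus v w' + edist w' q) := by
        gcongr
        rcases hw' with rfl | rfl
        · rw [edist_comm, hqu', e₁]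
        · rw [edist_comm, hqv', e₂]
    _ ≤ idist N.locus q v + edist v u := by rw [add_comm, idist_comm (p := q)]; gcongr
    _ ≤ idist N.locus q u := hu.idist_add_edist_le h (hu.notMem_segment_diff h h' hne hq)
    _ ≤ idiam N.locus := idist_le_idiam (h'.segment_subset_locus hq) h.left_mem_locus

def diamBound (N : PlaneNetwork) : ℝ≥0∞ :=
  (⨆ u ∈ N.V, ⨆ w ∈ N.V, idist N.locus u w) ⊔
    (⨆ u, ⨆ v, ⨆ u', ⨆ v', ⨆ (_ : N.IsEdge u v ∧ N.IsEdge u' v' ∧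
        ({u, v} : Set Pt) ≠ {u', v'} ∧ ¬N.IsPendantVertex u ∧ ¬N.IsPendantVertex v ∧
        ¬N.IsPendantVertex u' ∧ ¬N.IsPendantVertex v'),
      N.cycleValue u v u' v') ⊔
    (⨆ u, ⨆ v, ⨆ u', ⨆ v', ⨆ (_ : N.IsEdge u v ∧ N.IsPendantVertex u ∧
        N.IsEdge u' v' ∧ ¬N.IsPendantVertex u' ∧ ¬N.IsPendantVertex v'),
      N.pendantValue u v u' v')

lemma idist_le_diamBound_of_mem_V (hu : u ∈ N.V) (hv : v ∈ N.V) :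
    idist N.locus u v ≤ N.diamBound :=
  le_sup_of_le_left <| le_sup_of_le_left <| le_iSup₂_of_le u hu <| le_iSup₂_of_le v hv le_rfl

lemma cycleValue_le_diamBound (h : N.IsEdge u v) (h' : N.IsEdge u' v')
    (hne : ({u, v} : Set Pt) ≠ {u', v'}) (hu : ¬N.IsPendantVertex u) (hv : ¬N.IsPendantVertex v)
    (hu' : ¬N.IsPendantVertex u') (hv' : ¬N.IsPendantVertex v') :
    N.cycleValue u v u' v' ≤ N.diamBound :=
  le_sup_of_le_left <| le_sup_of_le_right <| le_iSup_of_le u <| le_iSup_of_le v <|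
    le_iSup_of_le u' <| le_iSup_of_le v' <| le_iSup_of_le ⟨h, h', hne, hu, hv, hu', hv'⟩ le_rfl

lemma pendantValue_le_diamBound (h : N.IsEdge u v) (hu : N.IsPendantVertex u)
    (h' : N.IsEdge u' v') (hu' : ¬N.IsPendantVertex u') (hv' : ¬N.IsPendantVertex v') :
    N.pendantValue u v u' v' ≤ N.diamBound :=
  le_sup_of_le_right <| le_iSup_of_le u <| le_iSup_of_le v <| le_iSup_of_le u' <|
    le_iSup_of_le v' <| le_iSup_of_le ⟨h, hu, h', hu', hv'⟩ le_rfl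

lemma diamBound_le_idiam (N : PlaneNetwork) : N.diamBound ≤ idiam N.locus := by
  refine sup_le (sup_le ?_ ?_) ?_
  · exact iSup₂_le fun u hu => iSup₂_le fun v hv =>
      idist_le_idiam (mem_locus_of_mem_V hu) (mem_locus_of_mem_V hv)
  · exact iSup_le fun u => iSup_le fun v => iSup_le fun u' => iSup_le fun v' =>
      iSup_le fun ⟨h, h', hne, _⟩ => h.cycleValue_le_idiam h' hne
  · refine iSup_le fun u => iSup_le fun v => iSup_le fun u' => iSup_le fun v' =>
      iSup_le fun ⟨h, hu, h', hu', hv'⟩ => hu.pendantValue_le_idiam h h' ?_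
    rintro (rfl | rfl)
    exacts [hu' hu, hv' hu]

lemma idist_le_diamBound (hp : p ∈ N.locus) (hq : q ∈ N.locus) :
    idist N.locus p q ≤ N.diamBound := by
  obtain ⟨u, v, h, hp, hvu⟩ := exists_isEdge_of_mem_locus hp
  obtain ⟨u', v', h', hq, hvu'⟩ := exists_isEdge_of_mem_locus hq
  by_cases hne : ({u, v} : Set Pt) = {u', v'}
  · rw [← segment_eq_segment_of_pair_eq hne] at hq
    exact (h.idist_le_of_mem_segment hp hq).trans
      (idist_le_diamBound_of_mem_V h.left_mem_V h.symm.left_mem_V)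
  by_cases hu : N.IsPendantVertex u <;> by_cases hu' : N.IsPendantVertex u'
  · exact (hu.idist_le_idist_of_isPendantVertex h hu' h' hne hp hq).trans
      (idist_le_diamBound_of_mem_V h.left_mem_V h'.left_mem_V)
  · exact (h.idist_le_pendantValue h' hp hq).trans
      (pendantValue_le_diamBound h hu h' hu' (mt hvu' hu'))
  · rw [idist_comm]
    exact (h'.idist_le_pendantValue h hq hp).trans
      (pendantValue_le_diamBound h' hu' h hu (mt hvu hu))
  · exact (h.idist_le_cycleValue h' hp hq).trans
      (cycleValue_le_diamBound h h' hne hu (mt hvu hu) hu' (mt hvu' hu'))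

lemma idiam_locus_eq_diamBound (N : PlaneNetwork) : idiam N.locus = N.diamBound :=
  le_antisymm (iSup₂_le fun _ hp => iSup₂_le fun _ hq => idist_le_diamBound hp hq)
    N.diamBound_le_idiam

end PlaneNetwork

theorem stmt7_general (N : PlaneNetwork) :
    idiam N.locus =
      (⨆ u ∈ N.V, ⨆ w ∈ N.V, idist N.locus u w) ⊔
      (⨆ u, ⨆ v, ⨆ u', ⨆ v', ⨆ (_ : N.IsEdge u v ∧ N.IsEdge u' v' ∧
          ({u, v} : Set Pt) ≠ {u', v'} ∧
          ¬N.IsPendantVertex u ∧ ¬N.IsPendantVertex v ∧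
          ¬N.IsPendantVertex u' ∧ ¬N.IsPendantVertex v'),
        min ((idist N.locus u v + idist N.locus v v' + idist N.locus v' u' +
                idist N.locus u' u) / 2)
            ((idist N.locus u v + idist N.locus v u' + idist N.locus u' v' +
                idist N.locus v' u) / 2)) ⊔
      (⨆ u, ⨆ v, ⨆ u', ⨆ v', ⨆ (_ : N.IsEdge u v ∧ N.IsPendantVertex u ∧
          N.IsEdge u' v' ∧ ¬N.IsPendantVertex u' ∧ ¬N.IsPendantVertex v'),
        idist N.locus u v +
          (idist N.locus v u' + idist N.locus u' v' + idist N.locus v' v) / 2) :=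
  N.idiam_locus_eq_diamBound

/-- The intrinsic diameter of the locus equals the maximum of the finite
collection of values: (1) distances between pairs of vertices; (2) for every pair of
distinct non-pendant edges `uv`, `u'v'`, the minimum of the two half-sum expressions;
(3) for every pendant edge `uv` with `u` pendant and every non-pendant edge `u'v'`, the
value `d(u,v) + (d(v,u') + d(u',v') + d(v',v))/2`. -/
theorem stmt7 (N : PlaneNetwork) (hconn : N.Connected) :
    idiam N.locus =
      (⨆ u ∈ N.V, ⨆ w ∈ N.V, idist N.locus u w) ⊔
      (⨆ u, ⨆ v, ⨆ u', ⨆ v', ⨆ (_ : N.IsEdge u v ∧ N.IsEdge u' v' ∧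
          ({u, v} : Set Pt) ≠ {u', v'} ∧
          ¬N.IsPendantVertex u ∧ ¬N.IsPendantVertex v ∧
          ¬N.IsPendantVertex u' ∧ ¬N.IsPendantVertex v'),
        min ((idist N.locus u v + idist N.locus v v' + idist N.locus v' u' +
                idist N.locus u' u) / 2)
            ((idist N.locus u v + idist N.locus v u' + idist N.locus u' v' +
                idist N.locus v' u) / 2)) ⊔
      (⨆ u, ⨆ v, ⨆ u', ⨆ v', ⨆ (_ : N.IsEdge u v ∧ N.IsPendantVertex u ∧
          N.IsEdge u' v' ∧ ¬N.IsPendantVertex u' ∧ ¬N.IsPendantVertex v'),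
        idist N.locus u v +
          (idist N.locus v u' + idist N.locus u' v' + idist N.locus v' v) / 2) :=
  stmt7_general N
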